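/- Let F₃: [0,∞) → [0,∞) be bounded decreasing, fix θ₃ ∈ (0,1), and for a dyadic interval I define the enlarged decay functional F̃₃(I) := Σ_{k=0}^∞ 2^{-kθ₃} F₃(rd(2^k I, 𝕀)), where 𝕀 = [-1/2,1/2] and rd(K, 𝕀) := dist(K,𝕀)/max{ℓ(K),1}. If additionally lim_{t→∞} F₃(t) = 0 and F₃ is bounded, then F̃₃ is finite for every interval I, and sup over dyadic intervals I with ℓ(I) ≤ 2^{-2N} or ℓ(I) ≥ 2^{2N} or rd(I,𝕀) ≥ 2N of [F₁(ℓ(I))·F̃₂(ℓ(I))·F̃₃(I)] tends to 0 as N → ∞, whenever F₁ is bounded increasing with lim_{t→0}F₁(t) = 0 and F̃₂ is bounded decreasing with lim_{t→∞}F̃₂(t) = 0. -/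
import Mathlib


open Set Filter

/-- relative distance to the unit interval `𝕀 = [-1/2,1/2]`:
`rd(K,𝕀) = dist(K,𝕀)/max(ℓ(K),1)` for `K = [lo,hi)`. -/
noncomputable def rdUnit (lo hi : ℝ) : ℝ :=
  max 0 (max (lo - 1 / 2) (-(1 / 2) - hi)) / max (hi - lo) 1

/-- the enlarged decay functional `F̃₃(I) = Σ_{k≥0} 2^{-kθ₃} F₃(rd(2^k I, 𝕀))`, where
`2^k I` is the concentric dilate of the interval `I = [a,b)`. -/
noncomputable def dilDecay (θ₃ : ℝ) (F₃ : ℝ → ℝ) (a b : ℝ) : ℝ :=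
  ∑' k : ℕ, (2:ℝ) ^ (-(k:ℝ) * θ₃) *
    F₃ (rdUnit ((a + b) / 2 - (2:ℝ) ^ (k:ℝ) * (b - a) / 2)
          ((a + b) / 2 + (2:ℝ) ^ (k:ℝ) * (b - a) / 2))

set_option maxHeartbeats 1000000

lemma rdUnit_nonneg (lo hi : ℝ) : 0 ≤ rdUnit lo hi :=
  div_nonneg (le_max_left _ _) (le_trans zero_le_one (le_max_right _ _))

lemma rd_dilate {a b s : ℝ} (hab : a < b) (hs : 1 ≤ s) :
    rdUnit a b / s - 1/2 ≤
      rdUnit ((a + b) / 2 - s * (b - a) / 2) ((a + b) / 2 + s * (b - a) / 2) := by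
  have hl : 0 < b - a := sub_pos.2 hab
  have hs0 : 0 < s := lt_of_lt_of_le one_pos hs
  have hsl : 0 < s * (b - a) := mul_pos hs0 hl
  unfold rdUnit
  have e1 : (a + b) / 2 + s * (b - a) / 2 - ((a + b) / 2 - s * (b - a) / 2) = s * (b - a) := by
    ring
  rw [e1]
  set N0 := max 0 (max (a - 1/2) (-(1/2) - b)) with hN0
  set num := max 0 (max ((a + b) / 2 - s * (b - a) / 2 - 1 / 2)
    (-(1 / 2) - ((a + b) / 2 + s * (b - a) / 2))) with hnum
  have hD : (1:ℝ) ≤ max (s * (b - a)) 1 := le_max_right _ _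
  have hD0 : 0 < max (s * (b - a)) 1 := lt_of_lt_of_le one_pos hD
  have hD0' : 0 < max (b - a) 1 := lt_of_lt_of_le one_pos (le_max_right _ _)
  have hnum0 : 0 ≤ num := le_max_left _ _
  have h1 : N0 - s * (b - a) / 2 ≤ num := by
    rcases le_total (max (a - 1/2) (-(1/2) - b)) 0 with h | h
    · have hz : N0 = 0 := max_eq_left h
      rw [hz]; linarith
    · have hN : N0 = max (a - 1/2) (-(1/2) - b) := max_eq_right h
      rcases le_total (a - 1/2) (-(1/2) - b) with h2 | h2
      · have hv : N0 = -(1/2) - b := by rw [hN, max_eq_right h2]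
        have hle : -(1/2) - ((a+b)/2 + s*(b-a)/2) ≤ num :=
          le_trans (le_max_right _ _) (le_max_right _ _)
        rw [hv]; linarith
      · have hv : N0 = a - 1/2 := by rw [hN, max_eq_left h2]
        have hle : (a+b)/2 - s*(b-a)/2 - 1/2 ≤ num :=
          le_trans (le_max_left _ _) (le_max_right _ _)
        rw [hv]; linarith
  have hDle : max (s * (b - a)) 1 ≤ s * max (b - a) 1 := by
    apply max_le
    · exact mul_le_mul_of_nonneg_left (le_max_left _ _) hs0.le
    · calc (1:ℝ) ≤ s := hs
        _ = s * 1 := (mul_one s).symm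
        _ ≤ s * max (b - a) 1 := mul_le_mul_of_nonneg_left (le_max_right _ _) hs0.le
  have hN0nn : 0 ≤ N0 := le_max_left _ _
  have step1 : N0 / max (b-a) 1 / s = N0 / (s * max (b-a) 1) := by
    rw [div_div, mul_comm]
  have step2 : N0 / (s * max (b-a) 1) ≤ N0 / max (s*(b-a)) 1 :=
    div_le_div_of_nonneg_left hN0nn hD0 hDle
  have step3 : s*(b-a)/2 / max (s*(b-a)) 1 ≤ 1/2 := by
    rw [div_le_div_iff₀ hD0 (by norm_num : (0:ℝ) < 2)]
    nlinarith [le_max_left (s*(b-a)) (1:ℝ)]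
  have step4 : (N0 - s*(b-a)/2) / max (s*(b-a)) 1 ≤ num / max (s*(b-a)) 1 :=
    (div_le_div_iff_of_pos_right hD0).2 h1
  rw [step1]
  have : (N0 - s*(b-a)/2) / max (s*(b-a)) 1
      = N0 / max (s*(b-a)) 1 - s*(b-a)/2 / max (s*(b-a)) 1 := sub_div _ _ _
  linarith



lemma two_rpow_two : (2:ℝ) ^ (2:ℝ) = 4 := by
  have h := Real.rpow_natCast (2:ℝ) 2
  rw [show ((2:ℕ):ℝ) = (2:ℝ) by norm_num] at h
  rw [h]; norm_num

lemma quarter_eq : ((1:ℝ)/4) = (2:ℝ) ^ (-2:ℝ) := by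
  rw [Real.rpow_neg (by norm_num), two_rpow_two]; norm_num

lemma heq_neg (N : ℕ) : (2:ℝ) ^ (-(2 * (N:ℝ))) = ((1:ℝ)/4) ^ N := by
  rw [quarter_eq, ← Real.rpow_natCast ((2:ℝ) ^ (-2:ℝ)) N, ← Real.rpow_mul (by norm_num)]
  congr 1; ring

lemma heq_pos (N : ℕ) : (2:ℝ) ^ (2 * (N:ℝ)) = (4:ℝ) ^ N := by
  rw [show (4:ℝ) = (2:ℝ)^(2:ℝ) from two_rpow_two.symm,
    ← Real.rpow_natCast ((2:ℝ) ^ (2:ℝ)) N, ← Real.rpow_mul (by norm_num)]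

lemma tsum_split_le {f : ℕ → ℝ} (hf : Summable f) {r C D : ℝ} (hr0 : 0 < r) (hr1 : r < 1)
    (K : ℕ) (hD : 0 ≤ D) (hfront : ∀ k, k < K → f k ≤ r ^ k * D)
    (htail : ∀ k, f k ≤ C * r ^ k) :
    ∑' k, f k ≤ D * (1 - r)⁻¹ + C * r ^ K * (1 - r)⁻¹ := by
  have hgeo : ∑' k : ℕ, r ^ k = (1 - r)⁻¹ := tsum_geometric_of_lt_one hr0.le hr1
  have hsgeo : Summable (fun k : ℕ => r ^ k) := summable_geometric_of_lt_one hr0.le hr1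
  rw [← Summable.sum_add_tsum_nat_add K hf]
  have h1 : (∑ k ∈ Finset.range K, f k) ≤ D * (1 - r)⁻¹ := by
    calc (∑ k ∈ Finset.range K, f k) ≤ ∑ k ∈ Finset.range K, r ^ k * D :=
          Finset.sum_le_sum fun k hk => hfront k (Finset.mem_range.1 hk)
      _ = (∑ k ∈ Finset.range K, r ^ k) * D := by rw [Finset.sum_mul]
      _ ≤ (1 - r)⁻¹ * D := by
          apply mul_le_mul_of_nonneg_right _ hD
          rw [← hgeo]
          exact Summable.sum_le_tsum (Finset.range K) (fun i _ => pow_nonneg hr0.le i) hsgeo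
      _ = D * (1 - r)⁻¹ := mul_comm _ _
  have hb : ∀ j : ℕ, f (j + K) ≤ C * r ^ K * r ^ j := by
    intro j
    calc f (j + K) ≤ C * r ^ (j + K) := htail (j + K)
      _ = C * r ^ K * r ^ j := by rw [pow_add]; ring
  have h2 : (∑' j : ℕ, f (j + K)) ≤ ∑' j : ℕ, C * r ^ K * r ^ j :=
    Summable.tsum_le_tsum hb ((summable_nat_add_iff K).2 hf) (hsgeo.mul_left (C * r ^ K))
  rw [tsum_mul_left, hgeo] at h2
  linarith

/-- Lemma lem:FF, part (c): the compound decay functional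
`F̃(I) := F₁(ℓ(I)) F̃₂(ℓ(I)) F̃₃(I)` (with `F̃₃` the dilated decay functional) is finite
on every interval, and tends to `0` uniformly over dyadic intervals `I` outside the
good class `𝓓(2N)`, i.e. those with `ℓ(I) ≤ 2^{-2N}`, or `ℓ(I) ≥ 2^{2N}`, or
`rd(I,𝕀) ≥ 2N`, as `N → ∞`. -/
theorem stmt18 (θ₃ : ℝ) (hθ₃ : θ₃ ∈ Set.Ioo (0:ℝ) 1)
    (F₁ F₂t F₃ : ℝ → ℝ)
    (h₁0 : ∀ t, 0 ≤ t → 0 ≤ F₁ t) (h₂0 : ∀ t, 0 ≤ t → 0 ≤ F₂t t)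
    (h₃0 : ∀ t, 0 ≤ t → 0 ≤ F₃ t)
    (h₁m : MonotoneOn F₁ (Ici 0)) (h₂m : AntitoneOn F₂t (Ici 0))
    (h₃m : AntitoneOn F₃ (Ici 0))
    (h₁b : ∃ M, ∀ t, 0 ≤ t → F₁ t ≤ M) (h₂b : ∃ M, ∀ t, 0 ≤ t → F₂t t ≤ M)
    (h₃b : ∃ M, ∀ t, 0 ≤ t → F₃ t ≤ M)
    (h₁lim : Tendsto F₁ (nhdsWithin 0 (Ioi 0)) (nhds 0))
    (h₂lim : Tendsto F₂t atTop (nhds 0))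
    (h₃lim : Tendsto F₃ atTop (nhds 0)) :
    (∀ a b : ℝ, a < b →
      Summable (fun k : ℕ => (2:ℝ) ^ (-(k:ℝ) * θ₃) *
        F₃ (rdUnit ((a + b) / 2 - (2:ℝ) ^ (k:ℝ) * (b - a) / 2)
              ((a + b) / 2 + (2:ℝ) ^ (k:ℝ) * (b - a) / 2))))
    ∧ ∀ ε : ℝ, 0 < ε → ∃ N₀ : ℕ, ∀ N : ℕ, N₀ ≤ N → ∀ zk m : ℤ,
        ((2:ℝ) ^ (zk : ℝ) ≤ (2:ℝ) ^ (-(2 * (N:ℝ))) ∨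
          (2:ℝ) ^ (2 * (N:ℝ)) ≤ (2:ℝ) ^ (zk : ℝ) ∨
          2 * (N:ℝ) ≤ rdUnit ((m : ℝ) * 2 ^ (zk : ℝ)) (((m : ℝ) + 1) * 2 ^ (zk : ℝ))) →
        F₁ ((2:ℝ) ^ (zk : ℝ)) * F₂t ((2:ℝ) ^ (zk : ℝ)) *
            dilDecay θ₃ F₃ ((m : ℝ) * 2 ^ (zk : ℝ)) (((m : ℝ) + 1) * 2 ^ (zk : ℝ)) < ε := by
  obtain ⟨hθ0, hθ1⟩ := hθ₃
  obtain ⟨M₁, hM₁⟩ := h₁b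
  obtain ⟨M₂, hM₂⟩ := h₂b
  obtain ⟨M₃, hM₃⟩ := h₃b
  have hM₁0 : 0 ≤ M₁ := le_trans (h₁0 0 le_rfl) (hM₁ 0 le_rfl)
  have hM₂0 : 0 ≤ M₂ := le_trans (h₂0 0 le_rfl) (hM₂ 0 le_rfl)
  have hM₃0 : 0 ≤ M₃ := le_trans (h₃0 0 le_rfl) (hM₃ 0 le_rfl)
  set r : ℝ := (2:ℝ) ^ (-θ₃) with hrdef
  have hr0 : 0 < r := Real.rpow_pos_of_pos two_pos _
  have hr1 : r < 1 := Real.rpow_lt_one_of_one_lt_of_neg one_lt_two (neg_lt_zero.2 hθ0)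
  have hr1' : 0 < 1 - r := by linarith
  have hkey : ∀ k : ℕ, (2:ℝ) ^ (-(k:ℝ) * θ₃) = r ^ k := by
    intro k
    rw [hrdef, ← Real.rpow_natCast ((2:ℝ) ^ (-θ₃)) k, ← Real.rpow_mul (by norm_num)]
    congr 1; ring
  have hgeo : ∑' k : ℕ, r ^ k = (1 - r)⁻¹ := tsum_geometric_of_lt_one hr0.le hr1
  have hsgeo : Summable (fun k : ℕ => r ^ k) := summable_geometric_of_lt_one hr0.le hr1
  -- abbreviate the summand
  set f : ℝ → ℝ → ℕ → ℝ := fun a b k => (2:ℝ) ^ (-(k:ℝ) * θ₃) *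
    F₃ (rdUnit ((a + b) / 2 - (2:ℝ) ^ (k:ℝ) * (b - a) / 2)
          ((a + b) / 2 + (2:ℝ) ^ (k:ℝ) * (b - a) / 2)) with hfdef
  have hfnn : ∀ a b : ℝ, ∀ k : ℕ, 0 ≤ f a b k := fun a b k =>
    mul_nonneg (Real.rpow_pos_of_pos two_pos _).le (h₃0 _ (rdUnit_nonneg _ _))
  have hfM : ∀ a b : ℝ, ∀ k : ℕ, f a b k ≤ M₃ * r ^ k := by
    intro a b k
    show (2:ℝ) ^ (-(k:ℝ) * θ₃) * F₃ _ ≤ M₃ * r ^ k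
    rw [hkey k]
    calc r ^ k * F₃ _ ≤ r ^ k * M₃ :=
          mul_le_mul_of_nonneg_left (hM₃ _ (rdUnit_nonneg _ _)) (pow_nonneg hr0.le _)
      _ = M₃ * r ^ k := mul_comm _ _
  have hsum : ∀ a b : ℝ, a < b → Summable (f a b) := by
    intro a b _
    exact Summable.of_nonneg_of_le (hfnn a b) (hfM a b) (hsgeo.mul_left M₃)
  refine ⟨fun a b hab => hsum a b hab, ?_⟩
  have hdileq : ∀ a b : ℝ, dilDecay θ₃ F₃ a b = ∑' k, f a b k := fun a b => rfl
  have hdil0 : ∀ a b : ℝ, 0 ≤ dilDecay θ₃ F₃ a b := by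
    intro a b
    rw [hdileq]
    exact tsum_nonneg (hfnn a b)
  have hdille : ∀ a b : ℝ, a < b → dilDecay θ₃ F₃ a b ≤ M₃ * (1 - r)⁻¹ := by
    intro a b hab
    rw [hdileq]
    calc (∑' k, f a b k) ≤ ∑' k : ℕ, M₃ * r ^ k :=
          Summable.tsum_le_tsum (hfM a b) (hsum a b hab) (hsgeo.mul_left M₃)
      _ = M₃ * (1 - r)⁻¹ := by rw [tsum_mul_left, hgeo]
  -- refined bound when rdUnit is large
  have hdil_rd : ∀ (K : ℕ) (T : ℝ), 0 ≤ T → ∀ a b : ℝ, a < b →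
      T ≤ rdUnit a b / 2 ^ K - 1/2 →
      dilDecay θ₃ F₃ a b ≤ F₃ T * (1 - r)⁻¹ + M₃ * r ^ K * (1 - r)⁻¹ := by
    intro K T hT a b hab hrd
    have hsab := hsum a b hab
    rw [hdileq]
    apply tsum_split_le hsab hr0 hr1 K (h₃0 T hT) _ (hfM a b)
    intro k hk
    show (2:ℝ) ^ (-(k:ℝ) * θ₃) * F₃ _ ≤ r ^ k * F₃ T
    rw [hkey k]
    apply mul_le_mul_of_nonneg_left _ (pow_nonneg hr0.le _)
    apply h₃m (mem_Ici.2 hT) (mem_Ici.2 (rdUnit_nonneg _ _))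
    have hs1 : (1:ℝ) ≤ (2:ℝ) ^ ((k:ℕ):ℝ) := Real.one_le_rpow one_le_two (Nat.cast_nonneg k)
    have hdd := rd_dilate hab hs1
    have hcast : (2:ℝ) ^ ((k:ℕ):ℝ) = (2:ℝ) ^ (k:ℕ) := Real.rpow_natCast 2 k
    have hmono : rdUnit a b / 2 ^ K ≤ rdUnit a b / (2:ℝ) ^ ((k:ℕ):ℝ) := by
      rw [hcast]
      exact div_le_div_of_nonneg_left (rdUnit_nonneg a b) (pow_pos two_pos k)
        (pow_le_pow_right₀ one_le_two hk.le)
    linarith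
  -- the ε–N₀ part
  intro ε hε
  set P₁ : ℝ := M₁ + 1 with hP₁def
  set P₂ : ℝ := M₂ + 1 with hP₂def
  set DD : ℝ := M₃ * (1 - r)⁻¹ + 1 with hDDdef
  have hP₁0 : 0 < P₁ := by positivity
  have hP₂0 : 0 < P₂ := by positivity
  have hDD0 : 0 < DD := by
    have : 0 ≤ M₃ * (1 - r)⁻¹ := mul_nonneg hM₃0 (inv_nonneg.2 hr1'.le)
    positivity
  have hdille' : ∀ a b : ℝ, a < b → dilDecay θ₃ F₃ a b ≤ DD := by
    intro a b hab
    have := hdille a b hab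
    rw [hDDdef]; linarith
  set e₁ : ℝ := ε / (P₂ * DD) with he₁def
  set e₂ : ℝ := ε / (P₁ * DD) with he₂def
  set e₃ : ℝ := ε / (P₁ * P₂) with he₃def
  have he₁0 : 0 < e₁ := div_pos hε (mul_pos hP₂0 hDD0)
  have he₂0 : 0 < e₂ := div_pos hε (mul_pos hP₁0 hDD0)
  have he₃0 : 0 < e₃ := div_pos hε (mul_pos hP₁0 hP₂0)
  -- case 1 data
  have h1ev : ∀ᶠ t in nhdsWithin (0:ℝ) (Ioi 0), F₁ t < e₁ :=
    h₁lim.eventually (gt_mem_nhds he₁0)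
  rw [eventually_nhdsWithin_iff, Metric.eventually_nhds_iff] at h1ev
  obtain ⟨δ, hδ0, hδ⟩ := h1ev
  -- case 2 data
  obtain ⟨T₂, hT₂⟩ := eventually_atTop.1 (h₂lim.eventually (gt_mem_nhds he₂0))
  -- case 3 data : choose K then T
  have hpowlim : Tendsto (fun K : ℕ => M₃ * r ^ K * (1 - r)⁻¹) atTop (nhds 0) := by
    have h0 : Tendsto (fun K : ℕ => r ^ K) atTop (nhds 0) :=
      tendsto_pow_atTop_nhds_zero_of_lt_one hr0.le hr1
    have := (h0.const_mul M₃).mul_const (1 - r)⁻¹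
    simpa using this
  obtain ⟨K, hK⟩ := eventually_atTop.1 (hpowlim.eventually (gt_mem_nhds (half_pos he₃0)))
  have hKlt : M₃ * r ^ K * (1 - r)⁻¹ < e₃ / 2 := hK K le_rfl
  obtain ⟨T₃', hT₃'⟩ := eventually_atTop.1
    (h₃lim.eventually (gt_mem_nhds (show (0:ℝ) < e₃ / 2 * (1 - r) by positivity)))
  set T : ℝ := max T₃' 0 with hTdef
  have hT0 : 0 ≤ T := le_max_right _ _
  have hF₃T : F₃ T < e₃ / 2 * (1 - r) := hT₃' T (le_max_left _ _)
  have hF₃T' : F₃ T * (1 - r)⁻¹ < e₃ / 2 := by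
    rw [← div_eq_mul_inv, div_lt_iff₀ hr1']
    exact hF₃T
  -- eventual conditions on N
  have hc1 : ∀ᶠ N : ℕ in atTop, (2:ℝ) ^ (-(2 * (N:ℝ))) < δ := by
    have h0 : Tendsto (fun N : ℕ => ((1:ℝ)/4) ^ N) atTop (nhds 0) :=
      tendsto_pow_atTop_nhds_zero_of_lt_one (by norm_num) (by norm_num)
    have heq : ∀ N : ℕ, (2:ℝ) ^ (-(2 * (N:ℝ))) = ((1:ℝ)/4) ^ N := heq_neg
    have h0' : Tendsto (fun N : ℕ => (2:ℝ) ^ (-(2 * (N:ℝ)))) atTop (nhds 0) := by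
      refine h0.congr fun N => (heq N).symm
    exact h0'.eventually (gt_mem_nhds hδ0)
  have hc2 : ∀ᶠ N : ℕ in atTop, T₂ ≤ (2:ℝ) ^ (2 * (N:ℝ)) := by
    have h4 : Tendsto (fun N : ℕ => (4:ℝ) ^ N) atTop atTop :=
      tendsto_pow_atTop_atTop_of_one_lt (by norm_num)
    have heq : ∀ N : ℕ, (2:ℝ) ^ (2 * (N:ℝ)) = (4:ℝ) ^ N := heq_pos
    have h4' : Tendsto (fun N : ℕ => (2:ℝ) ^ (2 * (N:ℝ))) atTop atTop :=
      h4.congr fun N => (heq N).symm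
    exact h4'.eventually_ge_atTop T₂
  have hc3 : ∀ᶠ N : ℕ in atTop, T ≤ 2 * (N:ℝ) / 2 ^ K - 1/2 := by
    have hlin : Tendsto (fun N : ℕ => 2 * (N:ℝ) / 2 ^ K - 1/2) atTop atTop := by
      apply tendsto_atTop_add_const_right
      apply Tendsto.atTop_div_const (pow_pos (two_pos) K)
      exact (tendsto_natCast_atTop_atTop (R := ℝ)).const_mul_atTop two_pos
    exact hlin.eventually_ge_atTop T
  obtain ⟨N₀, hN₀⟩ := eventually_atTop.1 ((hc1.and hc2).and hc3)
  refine ⟨N₀, fun N hN zk m hcase => ?_⟩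
  obtain ⟨⟨hN1, hN2⟩, hN3⟩ := hN₀ N hN
  set t : ℝ := (2:ℝ) ^ ((zk:ℤ):ℝ) with htdef
  have ht0 : 0 < t := Real.rpow_pos_of_pos two_pos _
  set a : ℝ := (m:ℝ) * t with hadef
  set b : ℝ := ((m:ℝ) + 1) * t with hbdef
  have hba : b - a = t := by rw [hadef, hbdef]; ring
  have hab : a < b := by
    have : 0 < b - a := by rw [hba]; exact ht0
    linarith
  have hF₁nn : 0 ≤ F₁ t := h₁0 t ht0.le
  have hF₂nn : 0 ≤ F₂t t := h₂0 t ht0.le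
  have hF₁le : F₁ t ≤ P₁ := le_trans (hM₁ t ht0.le) (by rw [hP₁def]; linarith)
  have hF₂le : F₂t t ≤ P₂ := le_trans (hM₂ t ht0.le) (by rw [hP₂def]; linarith)
  have hdnn : 0 ≤ dilDecay θ₃ F₃ a b := hdil0 a b
  have hdle : dilDecay θ₃ F₃ a b ≤ DD := hdille' a b hab
  rcases hcase with h | h | h
  · -- small length
    have htδ : t < δ := lt_of_le_of_lt h hN1
    have hF₁lt : F₁ t < e₁ := by
      refine hδ ?_ ht0
      rw [Real.dist_eq, sub_zero, abs_of_pos ht0]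
      exact htδ
    have h1 : F₁ t * F₂t t * dilDecay θ₃ F₃ a b ≤ F₁ t * (P₂ * DD) := by
      rw [mul_assoc]
      exact mul_le_mul_of_nonneg_left
        (mul_le_mul hF₂le hdle hdnn hP₂0.le) hF₁nn
    have h2 : F₁ t * (P₂ * DD) < e₁ * (P₂ * DD) :=
      mul_lt_mul_of_pos_right hF₁lt (mul_pos hP₂0 hDD0)
    have h3 : e₁ * (P₂ * DD) = ε := by
      rw [he₁def]
      field_simp
    linarith
  · -- large length
    have hF₂lt : F₂t t < e₂ := hT₂ t (le_trans hN2 h)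
    have h1 : F₁ t * F₂t t * dilDecay θ₃ F₃ a b ≤ P₁ * F₂t t * DD := by
      have s1 : F₁ t * F₂t t ≤ P₁ * F₂t t := mul_le_mul_of_nonneg_right hF₁le hF₂nn
      have s2 : F₁ t * F₂t t * dilDecay θ₃ F₃ a b ≤ P₁ * F₂t t * dilDecay θ₃ F₃ a b :=
        mul_le_mul_of_nonneg_right s1 hdnn
      have s3 : P₁ * F₂t t * dilDecay θ₃ F₃ a b ≤ P₁ * F₂t t * DD :=
        mul_le_mul_of_nonneg_left hdle (mul_nonneg hP₁0.le hF₂nn)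
      linarith
    have h2 : P₁ * F₂t t * DD < P₁ * e₂ * DD := by
      apply mul_lt_mul_of_pos_right _ hDD0
      exact mul_lt_mul_of_pos_left hF₂lt hP₁0
    have h3 : P₁ * e₂ * DD = ε := by
      rw [he₂def]
      field_simp
    linarith
  · -- large relative distance
    have hrd : T ≤ rdUnit a b / 2 ^ K - 1/2 := by
      have hmono : 2 * (N:ℝ) / 2 ^ K ≤ rdUnit a b / 2 ^ K :=
        (div_le_div_iff_of_pos_right (pow_pos two_pos K)).2 h
      linarith
    have hdlt : dilDecay θ₃ F₃ a b < e₃ := by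
      have := hdil_rd K T hT0 a b hab hrd
      linarith
    have h1 : F₁ t * F₂t t * dilDecay θ₃ F₃ a b ≤ P₁ * P₂ * dilDecay θ₃ F₃ a b := by
      apply mul_le_mul_of_nonneg_right _ hdnn
      exact mul_le_mul hF₁le hF₂le hF₂nn hP₁0.le
    have h2 : P₁ * P₂ * dilDecay θ₃ F₃ a b < P₁ * P₂ * e₃ :=
      mul_lt_mul_of_pos_left hdlt (mul_pos hP₁0 hP₂0)
    have h3 : P₁ * P₂ * e₃ = ε := by
      rw [he₃def]
      field_simp
    linarith
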